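/- arXiv:1402.5076 — 2 statements merged into one kernel-verified Lean document; each statement's English description precedes it below -/
import Mathlib

section
/- Let z ∈ ℝ^m, let L ≤ m be a nonnegative integer, and consider the problem of minimizing F(Λ) = ∑_{i=1}^m max(0, −Λ_i z_i) over Λ ∈ {−1, +1}^m subject to the constraint that Λ has at most L entries equal to −1. A minimizer is obtained in closed form by flipping the L worst violations: if S ⊆ {1,…,m} satisfies |S| ≤ L, S ⊆ {i : z_i < 0}, z_i ≤ z_j for all i ∈ S and all j ∉ S with z_j < 0, and |S| = min(L, #{i : z_i < 0}), then the vector Λ* with Λ*_i = −1 for i ∈ S and Λ*_i = +1 otherwise satisfies F(Λ*) ≤ F(Λ) for every feasible Λ. -/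
/-!
Write `N = {i | z i < 0}` and `T = {i | Λ i = -1}`. Every index of `N \ T` contributes `-z i`
to the loss of `Λ`, so the loss is at least `∑_{N \ T} (-z)`, and for `Λ*` (where `S ⊆ N`) it is
exactly `∑_{N \ S} (-z)`. It thus suffices that `∑_{N ∩ T} (-z) ≤ ∑_S (-z)`, an exchange
argument: `#(N ∩ T) ≤ min L #N = #S`, and each index of `N ∩ T` outside `S` has `-z` no larger
than any index of `S`.
-/

open Finset

section Exchange

variable {ι M : Type*} [DecidableEq ι] [AddCommMonoid M] [LinearOrder M] [IsOrderedAddMonoid M]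

/-- Each element of `t \ s` is dominated by the smallest element of `s \ t`, of which there are
at least `#(t \ s)` copies to compare with. -/
theorem sum_le_sum_of_card_le_of_sdiff_le {s t : Finset ι} {g : ι → M} (hcard : #t ≤ #s)
    (hpos : ∀ j ∈ s \ t, 0 ≤ g j) (hle : ∀ i ∈ t \ s, ∀ j ∈ s \ t, g i ≤ g j) :
    ∑ i ∈ t, g i ≤ ∑ i ∈ s, g i := by
  rw [← sum_inter_add_sum_sdiff t s, ← sum_inter_add_sum_sdiff s t, inter_comm s t]
  gcongr ∑ i ∈ t ∩ s, g i + ?_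
  have hcard' : #(t \ s) ≤ #(s \ t) := card_sdiff_le_card_sdiff_iff.mpr hcard
  rcases (s \ t).eq_empty_or_nonempty with hempty | hne
  · rw [hempty, card_empty, Nat.le_zero, card_eq_zero] at hcard'
    rw [hempty, hcard']
  obtain ⟨j₀, hj₀, hmin⟩ := exists_min_image (s \ t) g hne
  calc ∑ i ∈ t \ s, g i ≤ #(t \ s) • g j₀ := sum_le_card_nsmul _ _ _ fun i hi ↦ hle i hi j₀ hj₀
    _ ≤ #(s \ t) • g j₀ := nsmul_le_nsmul_left (hpos j₀ hj₀) hcard'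
    _ ≤ ∑ i ∈ s \ t, g i := card_nsmul_le_sum _ _ _ hmin

end Exchange

section OneSidedLoss

variable {ι : Type*} [Fintype ι] [DecidableEq ι]

theorem sum_sdiff_neg_le_sum_max_zero_neg_mul (z Λ : ι → ℝ) (hΛ : ∀ i, Λ i = 1 ∨ Λ i = -1) :
    ∑ i ∈ (univ.filter fun i ↦ z i < 0) \ univ.filter fun i ↦ Λ i = -1, -z i ≤
      ∑ i, max 0 (-(Λ i * z i)) := by
  rw [← univ_inter (_ \ _), ← sum_ite_mem]
  refine sum_le_sum fun i _ ↦ ?_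
  rcases hΛ i with h | h <;> split_ifs <;> simp_all

theorem sum_max_zero_neg_flip_eq (z : ι → ℝ) {S : Finset ι} (hS : ∀ i ∈ S, z i < 0) :
    ∑ i, max 0 (-((if i ∈ S then (-1 : ℝ) else 1) * z i)) =
      ∑ i ∈ (univ.filter fun i ↦ z i < 0) \ S, -z i := by
  rw [← univ_inter (_ \ _), ← sum_ite_mem]
  refine sum_congr rfl fun i _ ↦ ?_
  by_cases hi : i ∈ S
  · simp [hi, (hS i hi).le]
  · by_cases hz : z i < 0 <;> simp [hi, hz, le_of_lt, not_lt.mp]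

end OneSidedLoss

theorem stmt7_general {m : ℕ} (z : Fin m → ℝ) (L : ℕ)
    (S : Finset (Fin m))
    (hSneg : ∀ i ∈ S, z i < 0)
    (hSworst : ∀ i ∈ S, ∀ j ∉ S, z j < 0 → z i ≤ z j)
    (hScard : S.card = min L (Finset.univ.filter fun i => z i < 0).card) :
    ∀ Λ : Fin m → ℝ,
      (∀ i, Λ i = 1 ∨ Λ i = -1) →
      (Finset.univ.filter fun i => Λ i = -1).card ≤ L →
      ∑ i, max 0 (-((if i ∈ S then (-1 : ℝ) else 1) * z i)) ≤
        ∑ i, max 0 (-(Λ i * z i)) := by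
  intro Λ hΛ hT
  set N : Finset (Fin m) := univ.filter fun i ↦ z i < 0
  set T : Finset (Fin m) := univ.filter fun i ↦ Λ i = -1
  have hSN : S ⊆ N := fun i hi ↦ mem_filter.mpr ⟨mem_univ i, hSneg i hi⟩
  have hexchange : ∑ i ∈ N ∩ T, -z i ≤ ∑ i ∈ S, -z i := by
    refine sum_le_sum_of_card_le_of_sdiff_le ?_ ?_ ?_
    · exact hScard ▸ le_min ((card_le_card inter_subset_right).trans hT)
        (card_le_card inter_subset_left)
    · exact fun j hj ↦ neg_nonneg.mpr (hSneg j (mem_sdiff.mp hj).1).le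
    · intro i hi j hj
      obtain ⟨hiNT, hiS⟩ := mem_sdiff.mp hi
      have hzi : z i < 0 := (mem_filter.mp (mem_inter.mp hiNT).1).2
      exact neg_le_neg (hSworst j (mem_sdiff.mp hj).1 i hiS hzi)
  have hsplitS := sum_sdiff hSN (f := fun i ↦ -z i)
  have hsplitT := sum_inter_add_sum_sdiff N T (fun i ↦ -z i)
  rw [sum_max_zero_neg_flip_eq z hSneg]
  refine le_trans ?_ (sum_sdiff_neg_le_sum_max_zero_neg_mul z Λ hΛ)
  linarith

/-- Minimizing `F(Λ) = ∑_i max(0, -Λ_i z_i)` over `Λ ∈ {-1,+1}^m` with at most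
`L` entries equal to `-1` is achieved in closed form by flipping the `L` worst violations: if
`S` consists of (at most `L`, and as many as possible, i.e. `min(L, #{i : z_i < 0})`) indices
with `z_i < 0` of smallest value, then `Λ*` with `Λ*_i = -1` on `S` and `+1` elsewhere satisfies
`F(Λ*) ≤ F(Λ)` for every feasible `Λ`. -/
theorem stmt7 {m : ℕ} (z : Fin m → ℝ) (L : ℕ) (hL : L ≤ m)
    (S : Finset (Fin m)) (hSL : S.card ≤ L)
    (hSneg : ∀ i ∈ S, z i < 0)
    (hSworst : ∀ i ∈ S, ∀ j ∉ S, z j < 0 → z i ≤ z j)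
    (hScard : S.card = min L (Finset.univ.filter fun i => z i < 0).card) :
    ∀ Λ : Fin m → ℝ,
      (∀ i, Λ i = 1 ∨ Λ i = -1) →
      (Finset.univ.filter fun i => Λ i = -1).card ≤ L →
      ∑ i, max 0 (-((if i ∈ S then (-1 : ℝ) else 1) * z i)) ≤
        ∑ i, max 0 (-(Λ i * z i)) :=
  stmt7_general z L S hSneg hSworst hScard
end

section
/- Let z ∈ ℝ^m, let L ≤ m be a nonnegative integer, and consider the problem of minimizing F₂(Λ) = ½ ∑_{i=1}^m (min(Λ_i z_i, 0))² over Λ ∈ {−1, +1}^m subject to the constraint that Λ has at most L entries equal to −1. A minimizer is obtained by flipping the L worst violations: if S ⊆ {1,…,m} satisfies |S| ≤ L, S ⊆ {i : z_i < 0}, z_i ≤ z_j for all i ∈ S and all j ∉ S with z_j < 0, and |S| = min(L, #{i : z_i < 0}), then the vector Λ* with Λ*_i = −1 for i ∈ S and Λ*_i = +1 otherwise satisfies F₂(Λ*) ≤ F₂(Λ) for every feasible Λ. -/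
/-!
With `v i = min (z i) 0 ^ 2`, flipping the set `S` costs exactly `∑ v - ∑_{i ∈ S} v i` (on `S`
the flipped entry is positive), while a feasible `Λ` with flip set `T` costs at least
`∑ v - ∑_{i ∈ T} v i` (a flip removes at most `v i`). Only flips with `z i < 0` carry weight; there
are at most `min L #{z < 0} = #S` of them, and `v` is largest on the most negative entries, so an
exchange argument gives `∑_{T} v ≤ ∑_{S} v`.
-/

open Finset

namespace Finset

variable {ι M : Type*} [AddCommMonoid M] [LinearOrder M] [IsOrderedCancelAddMonoid M]

lemma sum_le_sum_of_card_le_of_forall_le {s t : Finset ι} {f : ι → M} (hcard : #s ≤ #t)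
    (hf : ∀ i ∈ t, 0 ≤ f i) (hle : ∀ i ∈ s, ∀ j ∈ t, f i ≤ f j) :
    ∑ i ∈ s, f i ≤ ∑ j ∈ t, f j := by
  obtain rfl | ht := t.eq_empty_or_nonempty
  · rw [card_eq_zero.mp (Nat.le_zero.mp hcard)]
  obtain ⟨j₀, hj₀, hmin⟩ := t.exists_min_image f ht
  calc ∑ i ∈ s, f i ≤ #s • f j₀ := sum_le_card_nsmul _ _ _ fun i hi => hle i hi j₀ hj₀
    _ ≤ #t • f j₀ := nsmul_le_nsmul_left (hf j₀ hj₀) hcard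
    _ ≤ ∑ j ∈ t, f j := card_nsmul_le_sum _ _ _ hmin

lemma sum_le_sum_of_card_le_of_forall_sdiff_le [DecidableEq ι] {s t : Finset ι} {f : ι → M}
    (hcard : #s ≤ #t) (hf : ∀ i ∈ t, 0 ≤ f i) (hle : ∀ i ∈ s \ t, ∀ j ∈ t \ s, f i ≤ f j) :
    ∑ i ∈ s, f i ≤ ∑ j ∈ t, f j :=
  sum_sdiff_le_sum_sdiff.mp <| sum_le_sum_of_card_le_of_forall_le
    (card_sdiff_le_card_sdiff_iff.mpr hcard) (fun j hj => hf j (mem_sdiff.mp hj).1) hle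

end Finset

section OneSidedLoss

variable {ι : Type*} [Fintype ι]

lemma sum_sq_min_flip_eq [DecidableEq ι] (z : ι → ℝ) {S : Finset ι} (hS : ∀ i ∈ S, z i < 0) :
    ∑ i, min ((if i ∈ S then (-1 : ℝ) else 1) * z i) 0 ^ 2 =
      ∑ i, min (z i) 0 ^ 2 - ∑ i ∈ S, min (z i) 0 ^ 2 := by
  rw [← sum_ite_mem_eq S, ← sum_sub_distrib]
  refine sum_congr rfl fun i _ => ?_
  split_ifs with hi
  · rw [min_eq_right (by linarith [hS i hi]), sub_self]
    ring
  · rw [one_mul, sub_zero]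

lemma sum_sq_min_sub_sum_flipped_le (z Λ : ι → ℝ) (hΛ : ∀ i, Λ i = 1 ∨ Λ i = -1) :
    ∑ i, min (z i) 0 ^ 2 - ∑ i ∈ univ.filter (fun i => Λ i = -1), min (z i) 0 ^ 2 ≤
      ∑ i, min (Λ i * z i) 0 ^ 2 := by
  rw [sum_filter, ← sum_sub_distrib]
  refine sum_le_sum fun i _ => ?_
  rcases hΛ i with h | h
  · simp [h, show (1 : ℝ) ≠ -1 by norm_num]
  · simp only [h, if_true, sub_self]
    positivity

end OneSidedLoss

lemma sum_sq_min_le_of_card_le_of_worst [DecidableEq ι] (z : ι → ℝ) {S T : Finset ι}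
    (hS : ∀ i ∈ S, z i < 0) (hworst : ∀ i ∈ S, ∀ j ∉ S, z j < 0 → z i ≤ z j)
    (hcard : #(T.filter fun i => z i < 0) ≤ #S) :
    ∑ i ∈ T, min (z i) 0 ^ 2 ≤ ∑ i ∈ S, min (z i) 0 ^ 2 := by
  rw [← sum_filter_of_ne (p := fun i => z i < 0) fun i _ hi => ?_]
  · refine sum_le_sum_of_card_le_of_forall_sdiff_le hcard (fun _ _ => sq_nonneg _) ?_
    intro j hj i hi
    obtain ⟨hjT, hjS⟩ := mem_sdiff.mp hj
    have hj0 := (mem_filter.mp hjT).2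
    have hi0 := hS i (mem_sdiff.mp hi).1
    have hij := hworst i (mem_sdiff.mp hi).1 j hjS hj0
    rw [min_eq_left hj0.le, min_eq_left hi0.le]
    nlinarith
  · by_contra hnonneg
    exact hi (by rw [min_eq_right (not_lt.mp hnonneg)]; ring)

theorem stmt8_general {m : ℕ} (z : Fin m → ℝ) (L : ℕ)
    (S : Finset (Fin m))
    (hSneg : ∀ i ∈ S, z i < 0)
    (hSworst : ∀ i ∈ S, ∀ j ∉ S, z j < 0 → z i ≤ z j)
    (hScard : S.card = min L (Finset.univ.filter fun i => z i < 0).card) :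
    ∀ Λ : Fin m → ℝ,
      (∀ i, Λ i = 1 ∨ Λ i = -1) →
      (Finset.univ.filter fun i => Λ i = -1).card ≤ L →
      (1 / 2) * ∑ i, (min ((if i ∈ S then (-1 : ℝ) else 1) * z i) 0) ^ 2 ≤
        (1 / 2) * ∑ i, (min (Λ i * z i) 0) ^ 2 := by
  intro Λ hΛ hflips
  set T := univ.filter fun i => Λ i = -1
  have hcard : #(T.filter fun i => z i < 0) ≤ #S := by
    rw [hScard]
    exact le_min ((card_le_card (filter_subset _ T)).trans hflips)
      (card_le_card (filter_subset_filter _ (subset_univ T)))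
  have hexchange := sum_sq_min_le_of_card_le_of_worst z hSneg hSworst hcard
  have hlower := sum_sq_min_sub_sum_flipped_le z Λ hΛ
  rw [sum_sq_min_flip_eq z hSneg]
  linarith

/-- Minimizing `F₂(Λ) = ½ ∑_i (min(Λ_i z_i, 0))²` over `Λ ∈ {-1,+1}^m` with at
most `L` entries equal to `-1` is achieved by flipping the `L` worst violations: if `S` consists
of (at most `L`, and as many as possible, i.e. `min(L, #{i : z_i < 0})`) indices with `z_i < 0`
of smallest value, then `Λ*` with `Λ*_i = -1` on `S` and `+1` elsewhere satisfies
`F₂(Λ*) ≤ F₂(Λ)` for every feasible `Λ`. -/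
theorem stmt8 {m : ℕ} (z : Fin m → ℝ) (L : ℕ) (hL : L ≤ m)
    (S : Finset (Fin m)) (hSL : S.card ≤ L)
    (hSneg : ∀ i ∈ S, z i < 0)
    (hSworst : ∀ i ∈ S, ∀ j ∉ S, z j < 0 → z i ≤ z j)
    (hScard : S.card = min L (Finset.univ.filter fun i => z i < 0).card) :
    ∀ Λ : Fin m → ℝ,
      (∀ i, Λ i = 1 ∨ Λ i = -1) →
      (Finset.univ.filter fun i => Λ i = -1).card ≤ L →
      (1 / 2) * ∑ i, (min ((if i ∈ S then (-1 : ℝ) else 1) * z i) 0) ^ 2 ≤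
        (1 / 2) * ∑ i, (min (Λ i * z i) 0) ^ 2 :=
  stmt8_general z L S hSneg hSworst hScard
end
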